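/- Let U ⊆ ℝⁿ (n ≥ 2) be open and let u : U → ℝ be of class C⁶ with Δ²u = 1 on U. Set v := −Δu and q := v²/4 − ((n+2)/(2n)) u. Then on U: (i) Δq = |∇v|²/2 + v/n, and (ii) Δ²q = |D²v|² − 1/n = |D²v|² − (Δv)²/n, where |D²v|² denotes the squared Frobenius norm of the Hessian of v (the sum of the squares of all second partial derivatives). -/

import Mathlib

open MeasureTheory Metric Set
open scoped RealInnerProductSpace ENNReal

noncomputable section

/-- `ℝⁿ` as a Euclidean space. -/
abbrev Euc (n : ℕ) := EuclideanSpace ℝ (Fin n)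

/-- Second partial derivative `∂_i ∂_j f` at `x`. -/
noncomputable def pd2 {n : ℕ} (f : Euc n → ℝ) (x : Euc n) (i j : Fin n) : ℝ :=
  fderiv ℝ (fun y => fderiv ℝ f y (EuclideanSpace.single j (1 : ℝ))) x
    (EuclideanSpace.single i (1 : ℝ))

/-- The Laplacian `Δf = ∑ᵢ ∂ᵢᵢ f`. -/
noncomputable def lap {n : ℕ} (f : Euc n → ℝ) (x : Euc n) : ℝ :=
  ∑ i, pd2 f x i i

/-- The squared Frobenius norm `|D²f|²` of the Hessian of `f` at `x`. -/
noncomputable def hess2 {n : ℕ} (f : Euc n → ℝ) (x : Euc n) : ℝ :=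
  ∑ i, ∑ j, (pd2 f x i j) ^ 2

/-- The `α`-Hölder seminorm of `f` on `s`. -/
noncomputable def holderSemi {n : ℕ} {F : Type*} [NormedAddCommGroup F]
    (α : ℝ) (s : Set (Euc n)) (f : Euc n → F) : ℝ :=
  sSup ((fun p : Euc n × Euc n => ‖f p.1 - f p.2‖ / ‖p.1 - p.2‖ ^ α) ''
    {p | p.1 ∈ s ∧ p.2 ∈ s ∧ p.1 ≠ p.2})

/-- The `C^{4+α}`-norm of `f` on `s`: the sum over `k = 0,…,4` of the sup-norms of
the `k`-th derivatives plus the `α`-Hölder seminorm of the 4th derivative. -/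
noncomputable def c4Norm {n : ℕ} {F : Type*} [NormedAddCommGroup F] [NormedSpace ℝ F]
    (α : ℝ) (s : Set (Euc n)) (f : Euc n → F) : ℝ :=
  (∑ k ∈ Finset.range 5, sSup ((fun x => ‖iteratedFDeriv ℝ k f x‖) '' s)) +
    holderSemi α s (iteratedFDeriv ℝ 4 f)

/-- `f ∈ C^{4+α}(Ω̄)`: `f` is `C⁴` on an open neighborhood of `closure Ω` and its
fourth derivative is `α`-Hölder continuous on `closure Ω`. -/
def MemC4Holder {n : ℕ} {F : Type*} [NormedAddCommGroup F] [NormedSpace ℝ F]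
    (α : ℝ) (Ω : Set (Euc n)) (f : Euc n → F) : Prop :=
  (∃ U, IsOpen U ∧ closure Ω ⊆ U ∧ ContDiffOn ℝ 4 f U) ∧
  ∃ M : ℝ, ∀ x ∈ closure Ω, ∀ y ∈ closure Ω,
    ‖iteratedFDeriv ℝ 4 f x - iteratedFDeriv ℝ 4 f y‖ ≤ M * ‖x - y‖ ^ α

/-- `Ω` is `ε₀`-close to the unit ball `𝔹` in the `C^{4+α}`-sense: there is a
`C^{4+α}` diffeomorphism `Φ : 𝔹̄ → Ω̄` (with `C^{4+α}` inverse `Ψ`) mapping `𝔹`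
onto `Ω`, with `‖Φ − Id‖_{C^{4+α}(𝔹̄)} < ε₀`. -/
def CloseToBall {n : ℕ} (α ε₀ : ℝ) (Ω : Set (Euc n)) : Prop :=
  ∃ Φ Ψ : Euc n → Euc n,
    MemC4Holder α (ball (0 : Euc n) 1) Φ ∧
    MemC4Holder α Ω Ψ ∧
    Φ '' ball (0 : Euc n) 1 = Ω ∧
    Φ '' closure (ball (0 : Euc n) 1) = closure Ω ∧
    (∀ x ∈ closure (ball (0 : Euc n) 1), Ψ (Φ x) = x) ∧
    (∀ y ∈ closure Ω, Φ (Ψ y) = y) ∧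
    c4Norm α (closure (ball (0 : Euc n) 1)) (fun x => Φ x - x) < ε₀

/-- `u` is a `C^{4+α}(Ω̄)` solution of the fourth order Dirichlet problem:
`Δ²u = 1` in `Ω`, `u = 0` and `∇u = 0` on `∂Ω`. -/
def IsSol4 {n : ℕ} (α : ℝ) (Ω : Set (Euc n)) (u : Euc n → ℝ) : Prop :=
  MemC4Holder α Ω u ∧
  (∀ x ∈ Ω, lap (lap u) x = 1) ∧
  ∀ x ∈ frontier Ω, u x = 0 ∧ gradient u x = 0

/-- The surface measure on `∂Ω`: the `(n−1)`-dimensional Hausdorff measure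
restricted to `∂Ω`. -/
noncomputable def bmeas {n : ℕ} (Ω : Set (Euc n)) : Measure (Euc n) :=
  (μH[(n : ℝ) - 1]).restrict (frontier Ω)

/-!
Since `Δv = -1` and `Δu = -v`, the product rule `Δ(v²) = 2vΔv + 2|∇v|²` gives (i);
the coefficient `(n+2)/(2n)` is what makes the `v`-terms combine to `v/n`. For (ii), the
flat Bochner formula `Δ|∇v|² = 2|D²v|² + 2⟨∇v, ∇Δv⟩` applies, and its last term vanishes
because `Δv` is locally constant, so `Δ²q = |D²v|² + Δv/n = |D²v|² - 1/n`.
-/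

open Filter Topology

section Calculus

variable {n : ℕ} {f g : Euc n → ℝ} {x : Euc n}

def partialDeriv (i : Fin n) (f : Euc n → ℝ) : Euc n → ℝ :=
  fun x => fderiv ℝ f x (EuclideanSpace.single i 1)

theorem pd2_eq_partialDeriv (i j : Fin n) :
    pd2 f x i j = partialDeriv i (partialDeriv j f) x := rfl

theorem gradient_apply_eq_partialDeriv (i : Fin n) : gradient f x i = partialDeriv i f x := by
  have h : ⟪gradient f x, EuclideanSpace.single i (1 : ℝ)⟫ = partialDeriv i f x :=
    InnerProductSpace.toDual_symm_apply
  rw [EuclideanSpace.inner_single_right] at h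
  simpa using h

theorem inner_gradient_gradient :
    ⟪gradient f x, gradient g x⟫ = ∑ i, partialDeriv i f x * partialDeriv i g x := by
  simp only [PiLp.inner_apply, gradient_apply_eq_partialDeriv, RCLike.inner_apply, conj_trivial]
  exact Finset.sum_congr rfl fun i _ => mul_comm _ _

theorem norm_gradient_sq : ‖gradient f x‖ ^ 2 = ∑ i, partialDeriv i f x ^ 2 := by
  rw [← real_inner_self_eq_norm_sq, inner_gradient_gradient]
  simp only [sq]

theorem hess2_eq_sum_norm_gradient_sq :
    hess2 f x = ∑ k, ‖gradient (partialDeriv k f) x‖ ^ 2 := by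
  simp only [hess2, norm_gradient_sq, pd2_eq_partialDeriv]
  exact Finset.sum_comm

theorem partialDeriv_comm (hf : ContDiffAt ℝ 2 f x) (i j : Fin n) :
    partialDeriv i (partialDeriv j f) x = partialDeriv j (partialDeriv i f) x := by
  have hd : DifferentiableAt ℝ (fderiv ℝ f) x :=
    (hf.fderiv_right (m := 1) le_rfl).differentiableAt one_ne_zero
  have hD2 (a b : Fin n) : partialDeriv a (partialDeriv b f) x =
      fderiv ℝ (fderiv ℝ f) x (EuclideanSpace.single a 1) (EuclideanSpace.single b 1) := by
    change fderiv ℝ (fun y => fderiv ℝ f y (EuclideanSpace.single b 1)) x _ = _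
    rw [fderiv_clm_apply hd (differentiableAt_const _)]
    simp
  rw [hD2, hD2, hf.isSymmSndFDerivAt (by simp)]

section Regularity

variable {m k : WithTop ℕ∞}

theorem ContDiffAt.partialDeriv (hf : ContDiffAt ℝ k f x) (hmk : m + 1 ≤ k) (i : Fin n) :
    ContDiffAt ℝ m (partialDeriv i f) x :=
  (hf.fderiv_right hmk).clm_apply contDiffAt_const

theorem ContDiffAt.differentiableAt_partialDeriv (hf : ContDiffAt ℝ 2 f x) (i : Fin n) :
    DifferentiableAt ℝ (_root_.partialDeriv i f) x :=
  (hf.partialDeriv one_add_one_eq_two.le i).differentiableAt one_ne_zero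

theorem ContDiffAt.eventually_differentiableAt (hf : ContDiffAt ℝ k f x) (hk : 1 ≤ k) :
    ∀ᶠ y in 𝓝 x, DifferentiableAt ℝ f y :=
  ((hf.of_le hk).eventually (by simp)).mono fun _ hy => hy.differentiableAt one_ne_zero

theorem ContDiffAt.lap (hf : ContDiffAt ℝ k f x) (hmk : m + 2 ≤ k) :
    ContDiffAt ℝ m (lap f) x := by
  have hm : m + 1 + 1 ≤ k := by rwa [add_assoc, one_add_one_eq_two]
  exact ContDiffAt.sum fun i _ => (hf.partialDeriv hm i).partialDeriv le_rfl i

theorem ContDiffAt.norm_gradient_sq (hf : ContDiffAt ℝ k f x) (hmk : m + 1 ≤ k) :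
    ContDiffAt ℝ m (fun y => ‖gradient f y‖ ^ 2) x := by
  simp only [_root_.norm_gradient_sq]
  exact ContDiffAt.sum fun i _ => (hf.partialDeriv hmk i).pow 2

end Regularity

theorem partialDeriv_fun_neg (i : Fin n) :
    partialDeriv i (fun y => -f y) x = -partialDeriv i f x := by
  simp [partialDeriv, fderiv_fun_neg]

theorem partialDeriv_fun_add (hf : DifferentiableAt ℝ f x) (hg : DifferentiableAt ℝ g x)
    (i : Fin n) :
    partialDeriv i (fun y => f y + g y) x = partialDeriv i f x + partialDeriv i g x := by
  simp [partialDeriv, fderiv_fun_add hf hg]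

theorem partialDeriv_const_mul (hf : DifferentiableAt ℝ f x) (c : ℝ) (i : Fin n) :
    partialDeriv i (fun y => c * f y) x = c * partialDeriv i f x := by
  simp [partialDeriv, fderiv_const_mul hf c]

theorem partialDeriv_fun_mul (hf : DifferentiableAt ℝ f x) (hg : DifferentiableAt ℝ g x)
    (i : Fin n) :
    partialDeriv i (fun y => f y * g y) x =
      f x * partialDeriv i g x + g x * partialDeriv i f x := by
  simp [partialDeriv, fderiv_fun_mul hf hg]

theorem partialDeriv_fun_sum {ι : Type*} {s : Finset ι} {F : ι → Euc n → ℝ}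
    (hF : ∀ k ∈ s, DifferentiableAt ℝ (F k) x) (i : Fin n) :
    partialDeriv i (fun y => ∑ k ∈ s, F k y) x = ∑ k ∈ s, partialDeriv i (F k) x := by
  simp [partialDeriv, fderiv_fun_sum hF]

theorem partialDeriv_congr (h : f =ᶠ[𝓝 x] g) (i : Fin n) :
    partialDeriv i f =ᶠ[𝓝 x] partialDeriv i g := by
  filter_upwards [h.fderiv (𝕜 := ℝ)] with y hy
  simp only [partialDeriv, hy]

theorem lap_eq_of_partialDeriv_eventuallyEq {G : Fin n → Euc n → ℝ}
    (h : ∀ i, partialDeriv i f =ᶠ[𝓝 x] G i) : lap f x = ∑ i, partialDeriv i (G i) x :=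
  Finset.sum_congr rfl fun i _ => (partialDeriv_congr (h i) i).eq_of_nhds

theorem lap_congr (h : f =ᶠ[𝓝 x] g) : lap f x = lap g x :=
  lap_eq_of_partialDeriv_eventuallyEq fun i => partialDeriv_congr h i

theorem lap_fun_neg : lap (fun y => -f y) x = -lap f x := by
  have h (i : Fin n) : partialDeriv i (fun y => -f y) = fun y => -partialDeriv i f y :=
    funext fun _ => partialDeriv_fun_neg i
  simp only [lap, pd2_eq_partialDeriv, h, partialDeriv_fun_neg, Finset.sum_neg_distrib]

theorem lap_fun_add (hf : ContDiffAt ℝ 2 f x) (hg : ContDiffAt ℝ 2 g x) :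
    lap (fun y => f y + g y) x = lap f x + lap g x := by
  have h (i : Fin n) : partialDeriv i (fun y => f y + g y) =ᶠ[𝓝 x]
      fun y => partialDeriv i f y + partialDeriv i g y := by
    filter_upwards [hf.eventually_differentiableAt one_le_two,
      hg.eventually_differentiableAt one_le_two] with y hfy hgy
    exact partialDeriv_fun_add hfy hgy i
  rw [lap_eq_of_partialDeriv_eventuallyEq h]
  simp only [lap, ← Finset.sum_add_distrib]
  exact Finset.sum_congr rfl fun i _ =>
    partialDeriv_fun_add (hf.differentiableAt_partialDeriv i) (hg.differentiableAt_partialDeriv i) i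

theorem lap_const_mul (hf : ContDiffAt ℝ 2 f x) (c : ℝ) :
    lap (fun y => c * f y) x = c * lap f x := by
  have h (i : Fin n) : partialDeriv i (fun y => c * f y) =ᶠ[𝓝 x]
      fun y => c * partialDeriv i f y := by
    filter_upwards [hf.eventually_differentiableAt one_le_two] with y hfy
    exact partialDeriv_const_mul hfy c i
  rw [lap_eq_of_partialDeriv_eventuallyEq h]
  simp only [lap, Finset.mul_sum]
  exact Finset.sum_congr rfl fun i _ =>
    partialDeriv_const_mul (hf.differentiableAt_partialDeriv i) c i

theorem lap_fun_sum {ι : Type*} {s : Finset ι} {F : ι → Euc n → ℝ}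
    (hF : ∀ k ∈ s, ContDiffAt ℝ 2 (F k) x) :
    lap (fun y => ∑ k ∈ s, F k y) x = ∑ k ∈ s, lap (F k) x := by
  have h (i : Fin n) : partialDeriv i (fun y => ∑ k ∈ s, F k y) =ᶠ[𝓝 x]
      fun y => ∑ k ∈ s, partialDeriv i (F k) y := by
    filter_upwards [(eventually_all_finset s).2
      fun k hk => (hF k hk).eventually_differentiableAt one_le_two] with y hy
    exact partialDeriv_fun_sum hy i
  rw [lap_eq_of_partialDeriv_eventuallyEq h]
  simp only [lap]
  rw [Finset.sum_comm]
  exact Finset.sum_congr rfl fun i _ =>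
    partialDeriv_fun_sum (fun k hk => (hF k hk).differentiableAt_partialDeriv i) i

theorem lap_fun_mul (hf : ContDiffAt ℝ 2 f x) (hg : ContDiffAt ℝ 2 g x) :
    lap (fun y => f y * g y) x =
      f x * lap g x + 2 * ⟪gradient f x, gradient g x⟫ + g x * lap f x := by
  have h (i : Fin n) : partialDeriv i (fun y => f y * g y) =ᶠ[𝓝 x]
      fun y => f y * partialDeriv i g y + g y * partialDeriv i f y := by
    filter_upwards [hf.eventually_differentiableAt one_le_two,
      hg.eventually_differentiableAt one_le_two] with y hfy hgy
    exact partialDeriv_fun_mul hfy hgy i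
  have hdf := hf.differentiableAt two_ne_zero
  have hdg := hg.differentiableAt two_ne_zero
  have hdf' := hf.differentiableAt_partialDeriv
  have hdg' := hg.differentiableAt_partialDeriv
  rw [lap_eq_of_partialDeriv_eventuallyEq h]
  simp only [lap, pd2_eq_partialDeriv, inner_gradient_gradient, Finset.mul_sum,
    ← Finset.sum_add_distrib]
  refine Finset.sum_congr rfl fun i _ => ?_
  rw [partialDeriv_fun_add (f := fun y => f y * partialDeriv i g y)
    (g := fun y => g y * partialDeriv i f y) (hdf.mul (hdg' i)) (hdg.mul (hdf' i)),
    partialDeriv_fun_mul hdf (hdg' i), partialDeriv_fun_mul hdg (hdf' i)]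
  ring

theorem lap_sq (hf : ContDiffAt ℝ 2 f x) :
    lap (fun y => f y ^ 2) x = 2 * f x * lap f x + 2 * ‖gradient f x‖ ^ 2 := by
  simp only [sq, lap_fun_mul hf hf, real_inner_self_eq_norm_mul_norm]
  ring

theorem lap_partialDeriv (hf : ContDiffAt ℝ 3 f x) (k : Fin n) :
    lap (partialDeriv k f) x = partialDeriv k (lap f) x := by
  have hf' (i : Fin n) : ContDiffAt ℝ 2 (partialDeriv i f) x := hf.partialDeriv (by norm_num) i
  have hcomm (i : Fin n) :
      partialDeriv i (partialDeriv k f) =ᶠ[𝓝 x] partialDeriv k (partialDeriv i f) := by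
    filter_upwards [(hf.of_le (by norm_num) : ContDiffAt ℝ 2 f x).eventually (by simp)]
      with y hy using partialDeriv_comm hy i k
  change _ = partialDeriv k (fun y => ∑ i, partialDeriv i (partialDeriv i f) y) x
  rw [lap_eq_of_partialDeriv_eventuallyEq hcomm,
    partialDeriv_fun_sum fun i _ => (hf' i).differentiableAt_partialDeriv i]
  exact Finset.sum_congr rfl fun i _ => partialDeriv_comm (hf' i) i k

theorem lap_norm_gradient_sq (hf : ContDiffAt ℝ 3 f x) :
    lap (fun y => ‖gradient f y‖ ^ 2) x =
      2 * hess2 f x + 2 * ⟪gradient f x, gradient (lap f) x⟫ := by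
  have hf' (k : Fin n) : ContDiffAt ℝ 2 (partialDeriv k f) x := hf.partialDeriv (by norm_num) k
  calc lap (fun y => ‖gradient f y‖ ^ 2) x
      = lap (fun y => ∑ k, partialDeriv k f y ^ 2) x := by simp only [norm_gradient_sq]
    _ = ∑ k, lap (fun y => partialDeriv k f y ^ 2) x := lap_fun_sum fun k _ => (hf' k).pow 2
    _ = ∑ k, (2 * partialDeriv k f x * partialDeriv k (lap f) x +
          2 * ‖gradient (partialDeriv k f) x‖ ^ 2) :=
        Finset.sum_congr rfl fun k _ => by rw [lap_sq (hf' k), lap_partialDeriv hf k]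
    _ = _ := by
        rw [hess2_eq_sum_norm_gradient_sq, inner_gradient_gradient, Finset.sum_add_distrib,
          Finset.mul_sum, Finset.mul_sum]
        simp only [mul_assoc, add_comm]

theorem lap_norm_gradient_sq_of_eventually_lap_eq {c : ℝ} (hf : ContDiffAt ℝ 3 f x)
    (hc : lap f =ᶠ[𝓝 x] fun _ => c) :
    lap (fun y => ‖gradient f y‖ ^ 2) x = 2 * hess2 f x := by
  rw [lap_norm_gradient_sq hf, hc.gradient_eq, gradient_fun_const, inner_zero_right]
  ring

theorem lap_sq_div_four_sub_const_mul {u v : Euc n → ℝ} (c : ℝ) (hv : ContDiffAt ℝ 2 v x)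
    (hu : ContDiffAt ℝ 2 u x) (hlap_u : lap u x = -v x) (hlap_v : lap v x = -1) :
    lap (fun y => v y ^ 2 / 4 - c * u y) x = ‖gradient v x‖ ^ 2 / 2 + (c - 1 / 2) * v x := by
  have h : (fun y => v y ^ 2 / 4 - c * u y) = fun y => (1 / 4 : ℝ) * v y ^ 2 + -c * u y :=
    funext fun y => by ring
  rw [h, lap_fun_add (contDiffAt_const.mul (hv.pow 2)) (contDiffAt_const.mul hu),
    lap_const_mul (hv.pow 2), lap_const_mul hu, lap_sq hv, hlap_u, hlap_v]
  ring

end Calculus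

theorem stmt7_general {n : ℕ} (U : Set (Euc n)) (hU : IsOpen U)
    (u : Euc n → ℝ) (hu : ContDiffOn ℝ 6 u U)
    (hbih : ∀ x ∈ U, lap (lap u) x = 1)
    (v q : Euc n → ℝ) (hv : ∀ x, v x = -lap u x)
    (hq : ∀ x, q x = (v x) ^ 2 / 4 - (((n : ℝ) + 2) / (2 * n)) * u x) :
    (∀ x ∈ U, lap q x = ‖gradient v x‖ ^ 2 / 2 + v x / n) ∧
    (∀ x ∈ U, lap (lap q) x = hess2 v x - 1 / n ∧
      hess2 v x - 1 / (n : ℝ) = hess2 v x - (lap v x) ^ 2 / n) := by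
  have hv_eq : v = fun y => -lap u y := funext hv
  have hlap_v (y) (hy : y ∈ U) : lap v y = -1 := by rw [hv_eq, lap_fun_neg, hbih y hy]
  have hu_at (y) (hy : y ∈ U) : ContDiffAt ℝ 6 u y := hu.contDiffAt (hU.mem_nhds hy)
  have hv_at (y) (hy : y ∈ U) : ContDiffAt ℝ 4 v y :=
    hv_eq ▸ ((hu_at y hy).lap (by norm_num)).neg
  have hlap_q (x) (hx : x ∈ U) : lap q x = ‖gradient v x‖ ^ 2 / 2 + v x / n := by
    -- `lap` is an empty sum on `Euc 0`, so `Δ²u = 1` at `x` rules out `n = 0`.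
    have hn : (n : ℝ) ≠ 0 := by
      rintro h
      obtain rfl : n = 0 := by exact_mod_cast h
      simpa [lap] using hbih x hx
    rw [funext hq, lap_sq_div_four_sub_const_mul _ ((hv_at x hx).of_le (by norm_num))
      ((hu_at x hx).of_le (by norm_num)) (by rw [hv]; ring) (hlap_v x hx)]
    field_simp
    ring
  refine ⟨hlap_q, fun x hx => ⟨?_, by rw [hlap_v x hx]; ring⟩⟩
  have hvx := hv_at x hx
  have hlap_q_near :
      lap q =ᶠ[𝓝 x] fun y => (1 / 2 : ℝ) * ‖gradient v y‖ ^ 2 + (1 / n : ℝ) * v y :=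
    eventually_of_mem (hU.mem_nhds hx) fun y hy => by rw [hlap_q y hy]; ring
  rw [lap_congr hlap_q_near,
    lap_fun_add (contDiffAt_const.mul (hvx.norm_gradient_sq (by norm_num)))
      (contDiffAt_const.mul (hvx.of_le (by norm_num))),
    lap_const_mul (hvx.norm_gradient_sq (by norm_num)), lap_const_mul (hvx.of_le (by norm_num)),
    lap_norm_gradient_sq_of_eventually_lap_eq (hvx.of_le (by norm_num))
      (eventually_of_mem (hU.mem_nhds hx) hlap_v), hlap_v x hx]
  ring

/-- for `u` of class `C⁶` on an open set `U ⊆ ℝⁿ` with `Δ²u = 1`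
on `U`, setting `v := −Δu` and `q := v²/4 − ((n+2)/(2n))u`, one has on `U`:
(i) `Δq = |∇v|²/2 + v/n`, and (ii) `Δ²q = |D²v|² − 1/n = |D²v|² − (Δv)²/n`. -/
theorem stmt7 {n : ℕ} (hn : 2 ≤ n) (U : Set (Euc n)) (hU : IsOpen U)
    (u : Euc n → ℝ) (hu : ContDiffOn ℝ 6 u U)
    (hbih : ∀ x ∈ U, lap (lap u) x = 1)
    (v q : Euc n → ℝ) (hv : ∀ x, v x = -lap u x)
    (hq : ∀ x, q x = (v x) ^ 2 / 4 - (((n : ℝ) + 2) / (2 * n)) * u x) :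
    (∀ x ∈ U, lap q x = ‖gradient v x‖ ^ 2 / 2 + v x / n) ∧
    (∀ x ∈ U, lap (lap q) x = hess2 v x - 1 / n ∧
      hess2 v x - 1 / (n : ℝ) = hess2 v x - (lap v x) ^ 2 / n) :=
  stmt7_general U hU u hu hbih v q hv hq
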